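/- arXiv:1704.07971 — 2 statements merged into one kernel-verified Lean document; each statement's English description precedes it below -/
import Mathlib

section
/- Lemma 4.1 (reduction to one-dimensional subspaces for convex Ω0): Let Ω0 ⊆ ℝ^p be a nonempty convex set, let v ∈ ℝ^p, let α ∈ (0,1), and let t > 0. Then sup over all k ∈ {1,…,p} and all U ∈ ℝ^{p×k} with UᵀU = I_k of F(α, t·d(v, Ω0; U), k) equals sup over all unit vectors u ∈ ℝ^p (‖u‖₂ = 1) of F(α, t·d(v, Ω0; u), 1). In particular, whenever the left-hand supremum is attained, it is attained at some pair with k = 1, i.e., at a single unit vector u*. -/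
open Matrix
open scoped Classical

open MeasureTheory Real Filter

noncomputable section

/-- ℓ∞ norm of a finite vector. -/
def linf {m : ℕ} (v : Fin m → ℝ) : ℝ := ⨆ i, |v i|

/-- ℓ2 norm of a finite vector. -/
def l2 {m : ℕ} (v : Fin m → ℝ) : ℝ := Real.sqrt (∑ i, (v i) ^ 2)

/-- The standard normal CDF. -/
def Phi (x : ℝ) : ℝ := ∫ t in Set.Iic x, Real.exp (-(t ^ 2) / 2) / Real.sqrt (2 * Real.pi)

/-- The standard normal quantile function (inverse of `Phi` on (0,1)). -/
def PhiInv (q : ℝ) : ℝ := sInf {x : ℝ | q ≤ Phi x}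

/-- The power function `F(α,x,k) = 1 − k[Φ(x+z) − Φ(x−z)]`, `z = Φ⁻¹(1 − α/(2k))`. -/
def Fpow (α x y : ℝ) : ℝ :=
  1 - y * (Phi (x + PhiInv (1 - α / (2 * y))) - Phi (x - PhiInv (1 - α / (2 * y))))

/-- The distance `d(v, Ω0; U) = inf_{θ∈Ω0} ‖Uᵀ(θ − v)‖_∞`. -/
def dU {p k : ℕ} (v : Fin p → ℝ) (Ω0 : Set (Fin p → ℝ))
    (U : Matrix (Fin p) (Fin k) ℝ) : ℝ :=
  sInf {s : ℝ | ∃ θ ∈ Ω0, s = linf (Uᵀ *ᵥ (θ - v))}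

/-- The distance `d(v, Ω0; u) = inf_{θ∈Ω0} |uᵀ(θ − v)|` for a single direction `u`. -/
def dU1 {p : ℕ} (v : Fin p → ℝ) (Ω0 : Set (Fin p → ℝ)) (u : Fin p → ℝ) : ℝ :=
  sInf {s : ℝ | ∃ θ ∈ Ω0, s = |∑ i, u i * (θ i - v i)|}

def gpdf (t : ℝ) : ℝ := Real.exp (-(t ^ 2) / 2) / Real.sqrt (2 * Real.pi)

lemma gpdf_nonneg (t : ℝ) : 0 ≤ gpdf t := by
  unfold gpdf; positivity

lemma integrable_gpdf : Integrable gpdf := by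
  have h : gpdf = fun t => Real.exp (-(1/2) * t ^ 2) * (Real.sqrt (2 * Real.pi))⁻¹ := by
    funext t; unfold gpdf; rw [div_eq_mul_inv]; ring_nf
  rw [h]
  exact (integrable_exp_neg_mul_sq (by norm_num)).mul_const _

lemma integral_gpdf : ∫ t, gpdf t = 1 := by
  have h : gpdf = fun t => Real.exp (-(1/2) * t ^ 2) * (Real.sqrt (2 * Real.pi))⁻¹ := by
    funext t; unfold gpdf; rw [div_eq_mul_inv]; ring_nf
  rw [h, integral_mul_const, integral_gaussian]
  rw [show π / (1/2) = 2 * π by ring]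
  rw [mul_inv_cancel₀ (by positivity)]

lemma Phi_eq (x : ℝ) : Phi x = ∫ t in Set.Iic x, gpdf t := rfl

lemma Phi_mono : Monotone Phi := by
  intro a b hab
  rw [Phi_eq, Phi_eq]
  apply setIntegral_mono_set integrable_gpdf.integrableOn
    (ae_of_all _ gpdf_nonneg)
  exact HasSubset.Subset.eventuallyLE (Set.Iic_subset_Iic.2 hab)

lemma Phi_le_one (x : ℝ) : Phi x ≤ 1 := by
  rw [Phi_eq, ← integral_gpdf]
  exact setIntegral_le_integral integrable_gpdf (ae_of_all _ gpdf_nonneg)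

lemma Phi_zero : Phi 0 = 1/2 := by
  have heven : ∀ t : ℝ, gpdf (-t) = gpdf t := by
    intro t; unfold gpdf; rw [neg_pow]; norm_num
  have hsym : ∫ t in Set.Iic (0:ℝ), gpdf t = ∫ t in Set.Ioi (0:ℝ), gpdf t := by
    have h1 : ∫ t in Set.Iic (0:ℝ), gpdf t = ∫ t in Set.Iic (0:ℝ), gpdf (-t) := by
      simp_rw [heven]
    rw [h1, integral_comp_neg_Iic, neg_zero]
  have htot : (∫ t in Set.Iic (0:ℝ), gpdf t) + ∫ t in Set.Ioi (0:ℝ), gpdf t = 1 := by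
    rw [← integral_gpdf]
    have := integral_add_compl (μ := volume) (s := Set.Iic (0:ℝ)) measurableSet_Iic integrable_gpdf
    rw [Set.compl_Iic] at this
    exact this
  rw [Phi_eq]; linarith [hsym, htot]

lemma tendsto_Phi_atTop : Tendsto Phi atTop (nhds 1) := by
  have := (aecover_Iic (μ := volume) (l := atTop) (b := fun x : ℝ => x)
    tendsto_id).integral_tendsto_of_countably_generated integrable_gpdf
  rw [integral_gpdf] at this
  exact this

lemma PhiInv_set_nonempty {q : ℝ} (hq : q < 1) : {x : ℝ | q ≤ Phi x}.Nonempty := by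
  obtain ⟨x, hx⟩ := (tendsto_Phi_atTop.eventually (eventually_gt_nhds hq)).exists
  exact ⟨x, le_of_lt hx⟩

lemma PhiInv_set_bddBelow {q : ℝ} (hq : 1/2 < q) : BddBelow {x : ℝ | q ≤ Phi x} := by
  refine ⟨0, fun x hx => ?_⟩
  by_contra hx0
  push_neg at hx0
  have : Phi x ≤ Phi 0 := Phi_mono (le_of_lt hx0)
  rw [Phi_zero] at this
  exact absurd (le_trans hx this) (not_le.2 hq)

lemma PhiInv_nonneg {q : ℝ} (hq : 1/2 < q) (hq1 : q < 1) : 0 ≤ PhiInv q := by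
  refine le_csInf (PhiInv_set_nonempty hq1) (fun x hx => ?_)
  by_contra h
  push_neg at h
  have : Phi x ≤ Phi 0 := Phi_mono (le_of_lt h)
  rw [Phi_zero] at this
  exact absurd (le_trans hx this) (not_le.2 hq)

lemma PhiInv_mono {q q' : ℝ} (hq : 1/2 < q) (hq' : q' < 1) (h : q ≤ q') :
    PhiInv q ≤ PhiInv q' :=
  csInf_le_csInf (PhiInv_set_bddBelow hq) (PhiInv_set_nonempty hq')
    (fun x hx => le_trans h hx)

lemma Phi_sub_Phi (a b : ℝ) : Phi b - Phi a = ∫ t in a..b, gpdf t := by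
  rw [Phi_eq, Phi_eq]
  exact intervalIntegral.integral_Iic_sub_Iic integrable_gpdf.integrableOn
    integrable_gpdf.integrableOn

-- window W z x = Phi (x+z) - Phi (x-z)
lemma window_nonneg {x z : ℝ} (hz : 0 ≤ z) : 0 ≤ Phi (x + z) - Phi (x - z) :=
  sub_nonneg.2 (Phi_mono (by linarith))

lemma window_mono_z {x z z' : ℝ} (hz : 0 ≤ z) (hzz : z ≤ z') :
    Phi (x + z) - Phi (x - z) ≤ Phi (x + z') - Phi (x - z') := by
  rw [Phi_sub_Phi, Phi_sub_Phi]
  have h1 : ∫ t in (x - z')..(x + z'), gpdf t =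
      (∫ t in (x - z')..(x - z), gpdf t) + ((∫ t in (x - z)..(x + z), gpdf t)
        + ∫ t in (x + z)..(x + z'), gpdf t) := by
    rw [intervalIntegral.integral_add_adjacent_intervals, 
      intervalIntegral.integral_add_adjacent_intervals] <;>
      exact integrable_gpdf.intervalIntegrable
  rw [h1]
  have h2 : 0 ≤ ∫ t in (x - z')..(x - z), gpdf t :=
    intervalIntegral.integral_nonneg (by linarith) (fun t _ => gpdf_nonneg t)
  have h3 : 0 ≤ ∫ t in (x + z)..(x + z'), gpdf t :=
    intervalIntegral.integral_nonneg (by linarith) (fun t _ => gpdf_nonneg t)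
  linarith

lemma window_anti_x {x x' z : ℝ} (hx : 0 ≤ x) (hxx : x ≤ x') (hz : 0 ≤ z) :
    Phi (x' + z) - Phi (x' - z) ≤ Phi (x + z) - Phi (x - z) := by
  rw [Phi_sub_Phi, Phi_sub_Phi]
  have hint : ∀ a b : ℝ, (∫ t in a..b, gpdf t) + ∫ t in b..(x'+z), gpdf t
      = ∫ t in a..(x'+z), gpdf t := fun a b =>
    intervalIntegral.integral_add_adjacent_intervals
      integrable_gpdf.intervalIntegrable integrable_gpdf.intervalIntegrable
  -- ∫_{x-z}^{x+z} - ∫_{x'-z}^{x'+z} = ∫_{x-z}^{x'-z} - ∫_{x+z}^{x'+z}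
  have hch : (∫ t in (x-z)..(x+z), gpdf t) - ∫ t in (x'-z)..(x'+z), gpdf t
      = (∫ t in (x-z)..(x'-z), gpdf t) - ∫ t in (x+z)..(x'+z), gpdf t := by
    have e1 := hint (x-z) (x+z)
    have e2 := hint (x-z) (x'-z)
    linarith
  have htrans : ∫ t in (x+z)..(x'+z), gpdf t = ∫ t in (x-z)..(x'-z), gpdf (t + 2*z) := by
    rw [intervalIntegral.integral_comp_add_right]
    congr 1 <;> ring
  have hmono : ∫ t in (x-z)..(x'-z), gpdf (t + 2*z) ≤ ∫ t in (x-z)..(x'-z), gpdf t := by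
    apply intervalIntegral.integral_mono_on (by linarith)
    · exact (integrable_gpdf.comp_add_right (2*z)).intervalIntegrable
    · exact integrable_gpdf.intervalIntegrable
    · intro t ht
      have ht1 : x - z ≤ t := ht.1
      unfold gpdf
      have h2 : -((t + 2*z)^2)/2 ≤ -(t^2)/2 := by nlinarith
      gcongr
  linarith [hch, htrans, hmono]

section FpowFacts
variable {α : ℝ}

lemma q_facts (hα : 0 < α) (hα1 : α < 1) {k : ℕ} (hk : 1 ≤ k) :
    1/2 < 1 - α / (2 * (k:ℝ)) ∧ 1 - α / (2 * (k:ℝ)) < 1 ∧ 1 - α/2 ≤ 1 - α / (2 * (k:ℝ)) := by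
  have hk1 : (1:ℝ) ≤ (k:ℝ) := by exact_mod_cast hk
  have h2k : (0:ℝ) < 2 * (k:ℝ) := by linarith
  have h1 : α / (2 * (k:ℝ)) ≤ α / 2 := by
    apply div_le_div_of_nonneg_left (le_of_lt hα) (by norm_num) (by linarith)
  have h2 : 0 < α / (2 * (k:ℝ)) := div_pos hα h2k
  refine ⟨by linarith, by linarith, by linarith⟩

lemma zk_nonneg (hα : 0 < α) (hα1 : α < 1) {k : ℕ} (hk : 1 ≤ k) : 0 ≤ PhiInv (1 - α / (2 * (k:ℝ))) := by
  obtain ⟨h1, h2, _⟩ := q_facts hα hα1 hk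
  exact PhiInv_nonneg h1 h2

lemma Fpow_le_one (hα : 0 < α) (hα1 : α < 1) {k : ℕ} (hk : 1 ≤ k) (x : ℝ) : Fpow α x k ≤ 1 := by
  unfold Fpow
  have hz := zk_nonneg hα hα1 hk
  have hW := window_nonneg (x := x) hz
  have hk0 : (0:ℝ) ≤ (k:ℝ) := Nat.cast_nonneg k
  nlinarith

lemma Fpow_le_k1 (hα : 0 < α) (hα1 : α < 1) {k : ℕ} (hk : 1 ≤ k) (x : ℝ) : Fpow α x k ≤ Fpow α x 1 := by
  unfold Fpow
  obtain ⟨hq1, hq2, hq3⟩ := q_facts hα hα1 hk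
  have hq1' : 1/2 < 1 - α / (2 * (1:ℝ)) := by linarith
  have hz1 : 0 ≤ PhiInv (1 - α / (2 * (1:ℝ))) := PhiInv_nonneg hq1' (by linarith)
  have hzz : PhiInv (1 - α / (2 * (1:ℝ))) ≤ PhiInv (1 - α / (2 * (k:ℝ))) := by
    apply PhiInv_mono hq1' hq2
    rw [mul_one]; exact hq3
  have hWm := window_mono_z (x := x) hz1 hzz
  have hW1 := window_nonneg (x := x) hz1
  have hWk := window_nonneg (x := x) (le_trans hz1 hzz)
  have hk1 : (1:ℝ) ≤ (k:ℝ) := by exact_mod_cast hk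
  push_cast
  nlinarith

lemma Fpow_mono_x (hα : 0 < α) (hα1 : α < 1) {x x' : ℝ} (hx : 0 ≤ x) (hxx : x ≤ x') :
    Fpow α x 1 ≤ Fpow α x' 1 := by
  unfold Fpow
  have hq1' : 1/2 < 1 - α / (2 * (1:ℝ)) := by
    rw [mul_one]; linarith
  have hz1 : 0 ≤ PhiInv (1 - α / (2 * (1:ℝ))) := PhiInv_nonneg hq1' (by rw [mul_one]; linarith)
  have := window_anti_x (z := PhiInv (1 - α / (2 * (1:ℝ)))) hx hxx hz1
  nlinarith

end FpowFacts

lemma linf_nonneg {m : ℕ} (x : Fin m → ℝ) : 0 ≤ linf x :=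
  Real.iSup_nonneg (fun _ => abs_nonneg _)

lemma abs_le_linf {m : ℕ} (x : Fin m → ℝ) (i : Fin m) : |x i| ≤ linf x := by
  unfold linf
  exact le_ciSup (f := fun i => |x i|) (Set.Finite.bddAbove (Set.finite_range _)) i

lemma linf_le {m : ℕ} [Nonempty (Fin m)] {x : Fin m → ℝ} {c : ℝ}
    (h : ∀ i, |x i| ≤ c) : linf x ≤ c := ciSup_le h

lemma linf_lt_iff {m : ℕ} [Nonempty (Fin m)] {x : Fin m → ℝ} {c : ℝ} :
    linf x < c ↔ ∀ i, |x i| < c := by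
  constructor
  · intro h i
    exact lt_of_le_of_lt (abs_le_linf x i) h
  · intro h
    obtain ⟨j₀, _, hj⟩ := Finset.exists_mem_eq_sup' (Finset.univ_nonempty (α := Fin m))
      (fun i => |x i|)
    have h1 : linf x ≤ Finset.univ.sup' Finset.univ_nonempty (fun i => |x i|) :=
      ciSup_le (fun i => Finset.le_sup' (f := fun i => |x i|) (Finset.mem_univ i))
    rw [hj] at h1
    exact lt_of_le_of_lt h1 (h j₀)

lemma linf_zero {m : ℕ} [Nonempty (Fin m)] : linf (0 : Fin m → ℝ) = 0 := by
  unfold linf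
  simp [ciSup_const]

lemma dU_nonneg {p k : ℕ} (v : Fin p → ℝ) (Ω0 : Set (Fin p → ℝ)) (hne : Ω0.Nonempty)
    (U : Matrix (Fin p) (Fin k) ℝ) : 0 ≤ dU v Ω0 U := by
  obtain ⟨θ, hθ⟩ := hne
  exact le_csInf ⟨_, θ, hθ, rfl⟩ (by rintro s ⟨θ', _, rfl⟩; exact linf_nonneg _)

lemma dU1_nonneg {p : ℕ} (v : Fin p → ℝ) (Ω0 : Set (Fin p → ℝ)) (hne : Ω0.Nonempty)
    (u : Fin p → ℝ) : 0 ≤ dU1 v Ω0 u := by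
  obtain ⟨θ, hθ⟩ := hne
  exact le_csInf ⟨_, θ, hθ, rfl⟩ (by rintro s ⟨θ', _, rfl⟩; exact abs_nonneg _)

lemma sum_mulVec_mul {p k : ℕ} (U : Matrix (Fin p) (Fin k) ℝ) (x : Fin k → ℝ)
    (y : Fin p → ℝ) : ∑ i, (U *ᵥ x) i * y i = ∑ j, x j * (Uᵀ *ᵥ y) j := by
  simp only [Matrix.mulVec, dotProduct, Matrix.transpose_apply,
    Finset.sum_mul, Finset.mul_sum]
  rw [Finset.sum_comm]
  apply Finset.sum_congr rfl
  intro j _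
  apply Finset.sum_congr rfl
  intro i _
  ring

lemma exists_unit_ge {p k : ℕ} (hp : 1 ≤ p) (hk : 1 ≤ k) (Ω0 : Set (Fin p → ℝ))
    (hne : Ω0.Nonempty) (hconv : Convex ℝ Ω0) (v : Fin p → ℝ)
    (U : Matrix (Fin p) (Fin k) ℝ) (hU : Uᵀ * U = 1) :
    ∃ u : Fin p → ℝ, l2 u = 1 ∧ dU v Ω0 U ≤ dU1 v Ω0 u := by
  haveI : Nonempty (Fin k) := ⟨⟨0, hk⟩⟩
  haveI : Nonempty (Fin p) := ⟨⟨0, hp⟩⟩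
  set D := dU v Ω0 U with hDdef
  by_cases hD : D ≤ 0
  · -- trivial case: any unit vector works
    refine ⟨fun i => if i = ⟨0, hp⟩ then 1 else 0, ?_, ?_⟩
    · unfold l2
      rw [show (∑ i, (if i = (⟨0, hp⟩ : Fin p) then (1:ℝ) else 0) ^ 2) = 1 by
        simp [apply_ite (fun x : ℝ => x ^ 2)]]
      exact Real.sqrt_one
    · exact le_trans hD (dU1_nonneg v Ω0 hne _)
  push_neg at hD
  -- the open convex set C
  set C : Set (Fin p → ℝ) := {θ | linf (Uᵀ *ᵥ (θ - v)) < D} with hCdef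
  have hmemD : ∀ θ ∈ Ω0, D ≤ linf (Uᵀ *ᵥ (θ - v)) := by
    intro θ hθ
    exact csInf_le ⟨0, by rintro s ⟨θ', _, rfl⟩; exact linf_nonneg _⟩ ⟨θ, hθ, rfl⟩
  have hdisj : Disjoint C Ω0 := by
    rw [Set.disjoint_left]
    intro θ hθC hθΩ
    exact absurd (hmemD θ hθΩ) (not_le.2 hθC)
  have hCconv : Convex ℝ C := by
    intro θ₁ h1 θ₂ h2 a b ha hb hab
    have hx : Uᵀ *ᵥ (a • θ₁ + b • θ₂ - v) =
        a • (Uᵀ *ᵥ (θ₁ - v)) + b • (Uᵀ *ᵥ (θ₂ - v)) := by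
      have hvec : a • θ₁ + b • θ₂ - v = a • (θ₁ - v) + b • (θ₂ - v) := by
        funext i
        simp only [Pi.add_apply, Pi.sub_apply, Pi.smul_apply, smul_eq_mul]
        linear_combination (v i) * hab
      rw [hvec, Matrix.mulVec_add, Matrix.mulVec_smul, Matrix.mulVec_smul]
    show linf (Uᵀ *ᵥ (a • θ₁ + b • θ₂ - v)) < D
    rw [hx, linf_lt_iff]
    intro j
    have e1 : |(Uᵀ *ᵥ (θ₁ - v)) j| < D := linf_lt_iff.1 h1 j
    have e2 : |(Uᵀ *ᵥ (θ₂ - v)) j| < D := linf_lt_iff.1 h2 j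
    have : |a • (Uᵀ *ᵥ (θ₁ - v)) j + b • (Uᵀ *ᵥ (θ₂ - v)) j|
        ≤ a * |(Uᵀ *ᵥ (θ₁ - v)) j| + b * |(Uᵀ *ᵥ (θ₂ - v)) j| := by
      refine le_trans (abs_add_le _ _) ?_
      simp only [smul_eq_mul, abs_mul, abs_of_nonneg ha, abs_of_nonneg hb, le_refl]
    have h3 : a * |(Uᵀ *ᵥ (θ₁ - v)) j| + b * |(Uᵀ *ᵥ (θ₂ - v)) j| < D := by
      rcases ha.eq_or_lt with rfl | ha'
      · rw [zero_add] at hab; subst hab; simpa using e2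
      · nlinarith
    calc |(a • (Uᵀ *ᵥ (θ₁ - v)) + b • (Uᵀ *ᵥ (θ₂ - v))) j|
        = |a • (Uᵀ *ᵥ (θ₁ - v)) j + b • (Uᵀ *ᵥ (θ₂ - v)) j| := rfl
      _ ≤ _ := this
      _ < D := h3
  have hCopen : IsOpen C := by
    have hcont : ∀ j, Continuous (fun θ : Fin p → ℝ => (Uᵀ *ᵥ (θ - v)) j) := by
      intro j
      have : (fun θ : Fin p → ℝ => (Uᵀ *ᵥ (θ - v)) j)
          = fun θ => ∑ i, U i j * (θ i - v i) := by
        funext θ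
        simp [Matrix.mulVec, dotProduct, Matrix.transpose_apply]
      rw [this]
      exact continuous_finset_sum _ (fun i _ =>
        continuous_const.mul ((continuous_apply i).sub continuous_const))
    have hCeq : C = ⋂ j, {θ : Fin p → ℝ | |(Uᵀ *ᵥ (θ - v)) j| < D} := by
      ext θ
      simp only [hCdef, Set.mem_setOf_eq, Set.mem_iInter, linf_lt_iff]
    rw [hCeq]
    exact isOpen_iInter_of_finite (fun j =>
      (isOpen_Iio).preimage (continuous_abs.comp (hcont j)))
  obtain ⟨f, s₀, hf1, hf2⟩ := geometric_hahn_banach_open hCconv hCopen hconv hdisj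
  -- represent f by a vector w
  set w : Fin p → ℝ := fun i => f (fun j => if i = j then 1 else 0) with hwdef
  have hfrep : ∀ θ : Fin p → ℝ, f θ = ∑ i, θ i * w i := by
    intro θ
    conv_lhs => rw [pi_eq_sum_univ θ]
    rw [map_sum]
    apply Finset.sum_congr rfl
    intro i _
    rw [_root_.map_smul, smul_eq_mul]
  have hvC : v ∈ C := by
    show linf (Uᵀ *ᵥ (v - v)) < D
    rw [sub_self, Matrix.mulVec_zero, linf_zero]
    exact hD
  set M := s₀ - f v with hMdef
  have hM : 0 < M := by
    have := hf1 v hvC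
    simp only [hMdef]
    linarith
  have hadm : ∀ h : Fin p → ℝ, linf (Uᵀ *ᵥ h) < D → (∑ i, h i * w i) < M := by
    intro h hh
    have hmem : v + h ∈ C := by
      show linf (Uᵀ *ᵥ (v + h - v)) < D
      rw [add_sub_cancel_left]
      exact hh
    have := hf1 _ hmem
    rw [map_add] at this
    rw [← hfrep]
    simp only [hMdef]
    linarith
  have hlb : ∀ θ ∈ Ω0, M ≤ ∑ i, (θ i - v i) * w i := by
    intro θ hθ
    have h1 := hf2 θ hθ
    have h2 : f θ - f v = ∑ i, (θ i - v i) * w i := by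
      rw [hfrep θ, hfrep v, ← Finset.sum_sub_distrib]
      apply Finset.sum_congr rfl
      intro i _
      ring
    simp only [hMdef]
    linarith
  -- residual of w off the column space is zero
  set c : Fin k → ℝ := Uᵀ *ᵥ w with hcdef
  set r : Fin p → ℝ := w - U *ᵥ c with hrdef
  have hUr : Uᵀ *ᵥ r = 0 := by
    rw [hrdef, Matrix.mulVec_sub, Matrix.mulVec_mulVec, hU, Matrix.one_mulVec, sub_self]
  have hr0 : ∀ i, r i = 0 := by
    by_contra hr
    push_neg at hr
    obtain ⟨i₀, hi₀⟩ := hr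
    have hrr : 0 < ∑ i, r i ^ 2 := by
      apply Finset.sum_pos' (fun i _ => sq_nonneg _)
      exact ⟨i₀, Finset.mem_univ _, by positivity⟩
    have hwr : ∀ s : ℝ, s * ∑ i, r i ^ 2 < M := by
      intro s
      have hadm' : linf (Uᵀ *ᵥ (s • r)) < D := by
        rw [Matrix.mulVec_smul, hUr, smul_zero, linf_zero]
        exact hD
      have := hadm _ hadm'
      have hcalc : ∑ i, (s • r) i * w i = s * ∑ i, r i ^ 2 := by
        have hrw : ∑ i, r i * w i = ∑ i, r i ^ 2 := by
          have hsplit : ∀ i, w i = r i + (U *ᵥ c) i := by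
            intro i; simp [hrdef]
          have h4 : ∑ i, r i * (U *ᵥ c) i = 0 := by
            rw [show ∑ i, r i * (U *ᵥ c) i = ∑ i, (U *ᵥ c) i * r i from
              Finset.sum_congr rfl (fun i _ => mul_comm _ _)]
            rw [sum_mulVec_mul, hUr]
            simp
          calc ∑ i, r i * w i = ∑ i, (r i * r i + r i * (U *ᵥ c) i) := by
                apply Finset.sum_congr rfl
                intro i _
                rw [hsplit i]; ring
            _ = (∑ i, r i * r i) + ∑ i, r i * (U *ᵥ c) i := Finset.sum_add_distrib
            _ = ∑ i, r i ^ 2 := by rw [h4, add_zero]; apply Finset.sum_congr rfl; intros; ring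
        calc ∑ i, (s • r) i * w i = s * ∑ i, r i * w i := by
              rw [Finset.mul_sum]; apply Finset.sum_congr rfl; intros; simp; ring
          _ = s * ∑ i, r i ^ 2 := by rw [hrw]
      rw [hcalc] at this
      exact this
    have := hwr (M / (∑ i, r i ^ 2))
    rw [div_mul_cancel₀ _ (ne_of_gt hrr)] at this
    exact lt_irrefl _ this
  have hw : w = U *ᵥ c := by
    funext i
    have := hr0 i
    simp only [hrdef, Pi.sub_apply] at this
    linarith
  -- the ℓ¹ bound
  set c1 := ∑ j, |c j| with hc1def
  have hc1nn : 0 ≤ c1 := Finset.sum_nonneg (fun j _ => abs_nonneg _)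
  have hDc1 : D * c1 ≤ M := by
    by_contra hlt
    push_neg at hlt
    have hc1pos : 0 < c1 := by
      rcases hc1nn.eq_or_lt with h | h
      · rw [← h, mul_zero] at hlt; exact absurd hM (not_lt.2 (le_of_lt hlt))
      · exact h
    set s := M / c1 with hsdef
    have hs0 : 0 ≤ s := le_of_lt (div_pos hM hc1pos)
    have hsD : s < D := (div_lt_iff₀ hc1pos).2 (by linarith [mul_comm D c1])
    set sgn : Fin k → ℝ := fun j => if c j < 0 then -1 else 1 with hsgndef
    have hsgn1 : ∀ j, |sgn j| = 1 := by
      intro j; simp only [hsgndef]; split <;> simp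
    have hsgnc : ∀ j, c j * sgn j = |c j| := by
      intro j
      simp only [hsgndef]
      split
      · rw [abs_of_neg (by assumption)]; ring
      · rw [abs_of_nonneg (not_lt.1 (by assumption))]; ring
    have hadm' : linf (Uᵀ *ᵥ (s • (U *ᵥ sgn))) < D := by
      rw [Matrix.mulVec_smul, Matrix.mulVec_mulVec, hU, Matrix.one_mulVec]
      have : linf (s • sgn) = s := by
        unfold linf
        have : (fun j => |(s • sgn) j|) = fun _ => s := by
          funext j
          simp [abs_mul, hsgn1 j, abs_of_nonneg hs0]
        rw [this, ciSup_const]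
      rw [this]
      exact hsD
    have hval := hadm _ hadm'
    have hcalc : ∑ i, (s • (U *ᵥ sgn)) i * w i = s * c1 := by
      calc ∑ i, (s • (U *ᵥ sgn)) i * w i = s * ∑ i, (U *ᵥ sgn) i * w i := by
            rw [Finset.mul_sum]; apply Finset.sum_congr rfl; intros; simp; ring
        _ = s * ∑ j, sgn j * c j := by rw [sum_mulVec_mul, ← hcdef]
        _ = s * c1 := by
            congr 1
            rw [hc1def]
            apply Finset.sum_congr rfl
            intro j _
            rw [← hsgnc j]; ring
    rw [hcalc, hsdef, div_mul_cancel₀ _ (ne_of_gt hc1pos)] at hval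
    exact lt_irrefl _ hval
  -- c is nonzero
  have hcne : ∃ j, c j ≠ 0 := by
    by_contra hc
    push_neg at hc
    have hw0 : w = 0 := by
      rw [hw]
      funext i
      simp [Matrix.mulVec, dotProduct, hc]
    obtain ⟨θ₀, hθ₀⟩ := hne
    have h1 := hf2 θ₀ hθ₀
    have h2 : f θ₀ = 0 := by rw [hfrep, hw0]; simp
    have h3 : f v = 0 := by rw [hfrep, hw0]; simp
    rw [hMdef, h3, sub_zero] at hM
    rw [h2] at h1
    linarith
  -- norms
  have hl2eq : ∑ i, w i ^ 2 = ∑ j, c j ^ 2 := by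
    rw [hw]
    calc ∑ i, (U *ᵥ c) i ^ 2 = ∑ i, (U *ᵥ c) i * (U *ᵥ c) i := by
          apply Finset.sum_congr rfl; intros; ring
      _ = ∑ j, c j * (Uᵀ *ᵥ (U *ᵥ c)) j := sum_mulVec_mul U c (U *ᵥ c)
      _ = ∑ j, c j ^ 2 := by
          rw [Matrix.mulVec_mulVec, hU, Matrix.one_mulVec]
          apply Finset.sum_congr rfl; intros; ring
  set nw := Real.sqrt (∑ i, w i ^ 2) with hnwdef
  have hsumpos : 0 < ∑ i, w i ^ 2 := by
    rw [hl2eq]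
    obtain ⟨j₀, hj₀⟩ := hcne
    apply Finset.sum_pos' (fun j _ => sq_nonneg _)
    exact ⟨j₀, Finset.mem_univ _, by positivity⟩
  have hnwpos : 0 < nw := Real.sqrt_pos.2 hsumpos
  have hnwsq : nw ^ 2 = ∑ i, w i ^ 2 := Real.sq_sqrt (le_of_lt hsumpos)
  have hnwc1 : nw ≤ c1 := by
    rw [hnwdef, hl2eq]
    have h1 : ∑ j, c j ^ 2 ≤ c1 ^ 2 := by
      rw [hc1def]
      calc ∑ j, c j ^ 2 = ∑ j, |c j| ^ 2 := by
            apply Finset.sum_congr rfl; intros; rw [sq_abs]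
        _ ≤ (∑ j, |c j|) ^ 2 := Finset.sum_sq_le_sq_sum_of_nonneg (fun j _ => abs_nonneg _)
    calc Real.sqrt (∑ j, c j ^ 2) ≤ Real.sqrt (c1 ^ 2) := Real.sqrt_le_sqrt h1
      _ = c1 := by rw [Real.sqrt_sq hc1nn]
  -- the unit vector
  refine ⟨fun i => w i / nw, ?_, ?_⟩
  · unfold l2
    have : ∑ i, (w i / nw) ^ 2 = 1 := by
      have : ∑ i, (w i / nw) ^ 2 = (∑ i, w i ^ 2) / nw ^ 2 := by
        rw [Finset.sum_div]
        apply Finset.sum_congr rfl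
        intros; rw [div_pow]
      rw [this, ← hnwsq, div_self (by positivity)]
    rw [this, Real.sqrt_one]
  · apply le_csInf
    · obtain ⟨θ₀, hθ₀⟩ := hne
      exact ⟨_, θ₀, hθ₀, rfl⟩
    rintro s ⟨θ, hθ, rfl⟩
    have h1 := hlb θ hθ
    have h2 : ∑ i, (w i / nw) * (θ i - v i) = (∑ i, (θ i - v i) * w i) / nw := by
      rw [Finset.sum_div]
      apply Finset.sum_congr rfl
      intros; ring
    have h3 : D * nw ≤ ∑ i, (θ i - v i) * w i := by
      calc D * nw ≤ D * c1 := by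
            apply mul_le_mul_of_nonneg_left hnwc1 (le_of_lt hD)
        _ ≤ M := hDc1
        _ ≤ _ := h1
    have h4 : D ≤ ∑ i, (w i / nw) * (θ i - v i) := by
      rw [h2]
      rw [le_div_iff₀ hnwpos]
      linarith [h3]
    exact le_trans h4 (le_abs_self _)

/-- Reduction to one-dimensional subspaces for convex `Ω0`: the supremum of
`F(α, t·d(v,Ω0;U), k)` over all `1 ≤ k ≤ p` and all `U ∈ ℝ^{p×k}` with orthonormal
columns equals the supremum over unit vectors `u` of `F(α, t·d(v,Ω0;u), 1)`; in
particular, whenever the left-hand supremum is attained it is attained at a single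
unit vector (`k = 1`). -/
theorem convex_reduction_to_k1 (p : ℕ) (hp : 1 ≤ p) (Ω0 : Set (Fin p → ℝ))
    (hne : Ω0.Nonempty) (hconv : Convex ℝ Ω0) (v : Fin p → ℝ)
    (α t : ℝ) (hα : α ∈ Set.Ioo (0 : ℝ) 1) (ht : 0 < t) :
    sSup {r : ℝ | ∃ k : ℕ, 1 ≤ k ∧ k ≤ p ∧ ∃ U : Matrix (Fin p) (Fin k) ℝ,
          Uᵀ * U = 1 ∧ r = Fpow α (t * dU v Ω0 U) k}
      = sSup {r : ℝ | ∃ u : Fin p → ℝ, l2 u = 1 ∧ r = Fpow α (t * dU1 v Ω0 u) 1} ∧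
    (sSup {r : ℝ | ∃ k : ℕ, 1 ≤ k ∧ k ≤ p ∧ ∃ U : Matrix (Fin p) (Fin k) ℝ,
          Uᵀ * U = 1 ∧ r = Fpow α (t * dU v Ω0 U) k}
        ∈ {r : ℝ | ∃ k : ℕ, 1 ≤ k ∧ k ≤ p ∧ ∃ U : Matrix (Fin p) (Fin k) ℝ,
          Uᵀ * U = 1 ∧ r = Fpow α (t * dU v Ω0 U) k} →
      ∃ u : Fin p → ℝ, l2 u = 1 ∧
        Fpow α (t * dU1 v Ω0 u) 1
          = sSup {r : ℝ | ∃ k : ℕ, 1 ≤ k ∧ k ≤ p ∧ ∃ U : Matrix (Fin p) (Fin k) ℝ,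
              Uᵀ * U = 1 ∧ r = Fpow α (t * dU v Ω0 U) k}) := by
  obtain ⟨hα0, hα1⟩ := hα
  set A := {r : ℝ | ∃ k : ℕ, 1 ≤ k ∧ k ≤ p ∧ ∃ U : Matrix (Fin p) (Fin k) ℝ,
          Uᵀ * U = 1 ∧ r = Fpow α (t * dU v Ω0 U) k} with hAdef
  set B := {r : ℝ | ∃ u : Fin p → ℝ, l2 u = 1 ∧ r = Fpow α (t * dU1 v Ω0 u) 1} with hBdef
  -- B embeds into A via k = 1
  have hBsubA : B ⊆ A := by
    rintro r ⟨u, hu, rfl⟩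
    have husq : ∑ i, u i ^ 2 = 1 := by
      have h1 : Real.sqrt (∑ i, u i ^ 2) = 1 := hu
      have h2 : 0 ≤ ∑ i, u i ^ 2 := Finset.sum_nonneg (fun i _ => sq_nonneg _)
      nlinarith [Real.sq_sqrt h2]
    refine ⟨1, le_refl 1, hp, Matrix.of (fun i (_ : Fin 1) => u i), ?_, ?_⟩
    · ext j j'
      have hj : j = 0 := Subsingleton.elim j 0
      have hj' : j' = 0 := Subsingleton.elim j' 0
      subst hj; subst hj'
      simp only [Matrix.mul_apply, Matrix.transpose_apply, Matrix.of_apply,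
        Matrix.one_apply_eq]
      calc ∑ i, u i * u i = ∑ i, u i ^ 2 := by
            apply Finset.sum_congr rfl; intros; ring
        _ = 1 := husq
    · have hdeq : dU v Ω0 (Matrix.of (fun i (_ : Fin 1) => u i)) = dU1 v Ω0 u := by
        unfold dU dU1
        congr 1
        ext s
        constructor
        · rintro ⟨θ, hθ, rfl⟩
          refine ⟨θ, hθ, ?_⟩
          unfold linf
          rw [ciSup_unique (s := fun j => |((Matrix.of (fun i (_ : Fin 1) => u i))ᵀ *ᵥ (θ - v)) j|)]
          simp [Matrix.mulVec, dotProduct]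
        · rintro ⟨θ, hθ, rfl⟩
          refine ⟨θ, hθ, ?_⟩
          unfold linf
          rw [ciSup_unique (s := fun j => |((Matrix.of (fun i (_ : Fin 1) => u i))ᵀ *ᵥ (θ - v)) j|)]
          simp [Matrix.mulVec, dotProduct]
      rw [hdeq, Nat.cast_one]
  -- nonemptiness
  have hu0 : l2 (fun i : Fin p => if i = ⟨0, hp⟩ then (1:ℝ) else 0) = 1 := by
    unfold l2
    rw [show (∑ i, (if i = (⟨0, hp⟩ : Fin p) then (1:ℝ) else 0) ^ 2) = 1 by
      simp [apply_ite (fun x : ℝ => x ^ 2)]]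
    exact Real.sqrt_one
  have hBne : B.Nonempty := ⟨_, _, hu0, rfl⟩
  have hAne : A.Nonempty := ⟨_, hBsubA hBne.choose_spec⟩
  -- boundedness
  have hAub : ∀ r ∈ A, r ≤ 1 := by
    rintro r ⟨k, hk1, _, U, _, rfl⟩
    exact Fpow_le_one hα0 hα1 hk1 _
  have hBub : ∀ r ∈ B, r ≤ 1 := fun r hr => hAub r (hBsubA hr)
  have hAbdd : BddAbove A := ⟨1, hAub⟩
  have hBbdd : BddAbove B := ⟨1, hBub⟩
  -- each element of A is dominated by an element of B
  have hdom : ∀ r ∈ A, ∃ r' ∈ B, r ≤ r' := by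
    rintro r ⟨k, hk1, _, U, hUU, rfl⟩
    obtain ⟨u, hu2, hud⟩ := exists_unit_ge hp hk1 Ω0 hne hconv v U hUU
    refine ⟨Fpow α (t * dU1 v Ω0 u) 1, ⟨u, hu2, rfl⟩, ?_⟩
    calc Fpow α (t * dU v Ω0 U) k ≤ Fpow α (t * dU v Ω0 U) 1 :=
          Fpow_le_k1 hα0 hα1 hk1 _
      _ ≤ Fpow α (t * dU1 v Ω0 u) 1 :=
          Fpow_mono_x hα0 hα1
            (mul_nonneg (le_of_lt ht) (dU_nonneg v Ω0 hne U))
            (mul_le_mul_of_nonneg_left hud (le_of_lt ht))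
  have hABle : sSup A ≤ sSup B := by
    apply csSup_le hAne
    intro r hr
    obtain ⟨r', hr', hle⟩ := hdom r hr
    exact le_trans hle (le_csSup hBbdd hr')
  have hBAle : sSup B ≤ sSup A := csSup_le_csSup hAbdd hBne hBsubA
  refine ⟨le_antisymm hABle hBAle, ?_⟩
  intro hmem
  obtain ⟨r', hr', hle⟩ := hdom _ hmem
  obtain ⟨u, hu2, rfl⟩ := hr'
  refine ⟨u, hu2, le_antisymm (le_csSup hAbdd (hBsubA ⟨u, hu2, rfl⟩)) hle⟩

end
end

section
/- Minimax inequality (Equation (dum3) in the proof of Lemma 4.1): Let Ω0 ⊆ ℝ^p be a nonempty convex set, let v ∈ ℝ^p, and let U ∈ ℝ^{p×k} satisfy UᵀU = I_k. Then inf_{θ∈Ω0} ‖Uᵀ(θ − v)‖_∞ ≤ sup_{u∈ℝ^p, ‖u‖₂≤1} inf_{θ∈Ω0} uᵀ(θ − v). -/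
/-!
Let `w` be the point of `closure Ω0` nearest to `v` and `d = ‖w - v‖₂`. Orthonormal columns give
`‖Uᵀx‖_∞ ≤ ‖x‖₂`, so the left side is at most `d`. The variational inequality of the projection,
`⟪w - v, θ - w⟫ ≥ 0` on `Ω0`, shows that the unit vector `u = (w - v)/d` satisfies
`uᵀ(θ - v) ≥ d` on `Ω0`, so the right side is at least `d`.
-/

open Matrix
open scoped Classical

noncomputable section

open Metric RealInnerProductSpace

section Projection

variable {E : Type*} [NormedAddCommGroup E] [InnerProductSpace ℝ E] [CompleteSpace E]
  {s : Set E}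

/-- `w` is the point of `closure s` nearest to `v`. -/
lemma Convex.exists_mem_closure_norm_sq_le_inner (hne : s.Nonempty) (hs : Convex ℝ s) (v : E) :
    ∃ w ∈ closure s, ∀ θ ∈ s, ‖w - v‖ ^ 2 ≤ ⟪w - v, θ - v⟫ := by
  obtain ⟨w, hw, hmin⟩ := exists_norm_eq_iInf_of_complete_convex hne.closure
    isClosed_closure.isComplete hs.closure v
  have hvar := (norm_eq_iInf_iff_real_inner_le_zero hs.closure hw).1 hmin
  refine ⟨w, hw, fun θ hθ => ?_⟩
  have hθw : 0 ≤ ⟪w - v, θ - w⟫ := by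
    have := hvar θ (subset_closure hθ)
    rw [← neg_sub, inner_neg_left] at this
    linarith
  calc ‖w - v‖ ^ 2 ≤ ⟪w - v, θ - w⟫ + ⟪w - v, w - v⟫ := by
        rw [real_inner_self_eq_norm_sq]; linarith
    _ = ⟪w - v, θ - v⟫ := by rw [← inner_add_right, sub_add_sub_cancel]

lemma Convex.exists_norm_le_one_infDist_le_inner (hne : s.Nonempty) (hs : Convex ℝ s) (v : E) :
    ∃ u : E, ‖u‖ ≤ 1 ∧ ∀ θ ∈ s, infDist v s ≤ ⟪u, θ - v⟫ := by
  obtain ⟨w, hw, hproj⟩ := hs.exists_mem_closure_norm_sq_le_inner hne v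
  -- when `w = v` this is `u = 0`, since `0⁻¹ = 0`
  refine ⟨‖w - v‖⁻¹ • (w - v), ?_, fun θ hθ => ?_⟩
  · rw [norm_smul, norm_inv, norm_norm]
    exact inv_mul_le_one_of_le₀ le_rfl (norm_nonneg _)
  · have hdist : infDist v s ≤ ‖w - v‖ := by
      rw [← infDist_closure, ← dist_eq_norm']
      exact infDist_le_dist_of_mem hw
    calc infDist v s ≤ ‖w - v‖ := hdist
      _ = ‖w - v‖⁻¹ * ‖w - v‖ ^ 2 := by rw [sq, ← mul_assoc, inv_mul_mul_self]
      _ ≤ ⟪‖w - v‖⁻¹ • (w - v), θ - v⟫ := by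
        rw [real_inner_smul_left]
        exact mul_le_mul_of_nonneg_left (hproj θ hθ) (inv_nonneg.2 (norm_nonneg _))

end Projection

lemma l2_eq_norm {m : ℕ} (x : Fin m → ℝ) : l2 x = ‖WithLp.toLp 2 x‖ := by
  simp [l2, EuclideanSpace.norm_eq]

lemma sum_mul_eq_inner {m : ℕ} (x y : Fin m → ℝ) :
    ∑ i, x i * y i = ⟪WithLp.toLp 2 x, WithLp.toLp 2 y⟫ := by
  simp [PiLp.inner_apply, mul_comm]

lemma abs_sum_mul_le_l2_mul_l2 {m : ℕ} (x y : Fin m → ℝ) : |∑ i, x i * y i| ≤ l2 x * l2 y := by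
  rw [l2_eq_norm, l2_eq_norm, sum_mul_eq_inner]
  exact abs_real_inner_le_norm _ _

lemma linf_transpose_mulVec_le_l2 {p k : ℕ} {U : Matrix (Fin p) (Fin k) ℝ} (hU : Uᵀ * U = 1)
    (x : Fin p → ℝ) : linf (Uᵀ *ᵥ x) ≤ l2 x := by
  refine Real.iSup_le (fun i => ?_) (Real.sqrt_nonneg _)
  have hcol : l2 (fun j => U j i) = 1 := by
    have := congr_fun₂ hU i i
    simp only [Matrix.mul_apply, Matrix.transpose_apply, Matrix.one_apply_eq] at this
    simp [l2, sq, this]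
  calc |(Uᵀ *ᵥ x) i| = |∑ j, U j i * x j| := rfl
    _ ≤ l2 (fun j => U j i) * l2 x := abs_sum_mul_le_l2_mul_l2 _ _
    _ = l2 x := by rw [hcol, one_mul]

lemma sInf_linf_transpose_mulVec_le_infDist {p k : ℕ} {Ω0 : Set (Fin p → ℝ)} (hne : Ω0.Nonempty)
    {U : Matrix (Fin p) (Fin k) ℝ} (hU : Uᵀ * U = 1) (v : Fin p → ℝ) :
    sInf {s : ℝ | ∃ θ ∈ Ω0, s = linf (Uᵀ *ᵥ (θ - v))}
      ≤ infDist (WithLp.toLp 2 v) (WithLp.toLp 2 '' Ω0) := by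
  have : Nonempty (WithLp.toLp 2 '' Ω0) := (hne.image _).to_subtype
  rw [infDist_eq_iInf]
  refine le_ciInf ?_
  rintro ⟨_, θ, hθ, rfl⟩
  have hbdd : BddBelow {s : ℝ | ∃ θ ∈ Ω0, s = linf (Uᵀ *ᵥ (θ - v))} :=
    ⟨0, by rintro _ ⟨θ, -, rfl⟩; exact Real.iSup_nonneg fun i => abs_nonneg _⟩
  calc sInf {s : ℝ | ∃ θ ∈ Ω0, s = linf (Uᵀ *ᵥ (θ - v))} ≤ linf (Uᵀ *ᵥ (θ - v)) :=
        csInf_le hbdd ⟨θ, hθ, rfl⟩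
    _ ≤ l2 (θ - v) := linf_transpose_mulVec_le_l2 hU _
    _ = dist (WithLp.toLp 2 v) (WithLp.toLp 2 θ) := by rw [l2_eq_norm, dist_eq_norm']; rfl

lemma sInf_sum_mul_sub_le_l2 {p : ℕ} {Ω0 : Set (Fin p → ℝ)} {θ0 : Fin p → ℝ} (hθ0 : θ0 ∈ Ω0)
    (v : Fin p → ℝ) {u : Fin p → ℝ} (hu : l2 u ≤ 1) :
    sInf {r : ℝ | ∃ θ ∈ Ω0, r = ∑ i, u i * (θ i - v i)} ≤ l2 (θ0 - v) := by
  by_cases hb : BddBelow {r : ℝ | ∃ θ ∈ Ω0, r = ∑ i, u i * (θ i - v i)}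
  · refine csInf_le_of_le hb ⟨θ0, hθ0, rfl⟩ ?_
    calc ∑ i, u i * (θ0 i - v i) ≤ l2 u * l2 (θ0 - v) :=
          (le_abs_self _).trans (abs_sum_mul_le_l2_mul_l2 u (θ0 - v))
      _ ≤ l2 (θ0 - v) := mul_le_of_le_one_left (Real.sqrt_nonneg _) hu
  · rw [Real.sInf_of_not_bddBelow hb]
    exact Real.sqrt_nonneg _

lemma infDist_le_sSup_sInf_sum_mul_sub {p : ℕ} {Ω0 : Set (Fin p → ℝ)} (hne : Ω0.Nonempty)
    (hconv : Convex ℝ Ω0) (v : Fin p → ℝ) :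
    infDist (WithLp.toLp 2 v) (WithLp.toLp 2 '' Ω0)
      ≤ sSup {s : ℝ | ∃ u : Fin p → ℝ, l2 u ≤ 1 ∧
          s = sInf {r : ℝ | ∃ θ ∈ Ω0, r = ∑ i, u i * (θ i - v i)}} := by
  have hconv' : Convex ℝ (WithLp.toLp 2 '' Ω0 : Set (EuclideanSpace ℝ (Fin p))) :=
    hconv.linear_image (WithLp.linearEquiv 2 ℝ (Fin p → ℝ)).symm.toLinearMap
  obtain ⟨u, hu, hinner⟩ := hconv'.exists_norm_le_one_infDist_le_inner (hne.image _) _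
  obtain ⟨θ0, hθ0⟩ := hne
  have hbdd : BddAbove {s : ℝ | ∃ u : Fin p → ℝ, l2 u ≤ 1 ∧
      s = sInf {r : ℝ | ∃ θ ∈ Ω0, r = ∑ i, u i * (θ i - v i)}} :=
    ⟨l2 (θ0 - v), by rintro _ ⟨u, hu, rfl⟩; exact sInf_sum_mul_sub_le_l2 hθ0 v hu⟩
  refine le_csSup_of_le hbdd ⟨u, by rwa [l2_eq_norm], rfl⟩ (le_csInf ⟨_, θ0, hθ0, rfl⟩ ?_)
  rintro _ ⟨θ, hθ, rfl⟩
  rw [sum_mul_eq_inner]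
  exact hinner _ ⟨θ, hθ, rfl⟩

/-- Minimax inequality: for nonempty convex `Ω0` and `U` with orthonormal columns,
`inf_{θ∈Ω0} ‖Uᵀ(θ−v)‖_∞ ≤ sup_{‖u‖₂≤1} inf_{θ∈Ω0} uᵀ(θ−v)`. -/
theorem minimax_dum3 (p k : ℕ) (Ω0 : Set (Fin p → ℝ)) (hne : Ω0.Nonempty)
    (hconv : Convex ℝ Ω0) (v : Fin p → ℝ)
    (U : Matrix (Fin p) (Fin k) ℝ) (hU : Uᵀ * U = 1) :
    sInf {s : ℝ | ∃ θ ∈ Ω0, s = linf (Uᵀ *ᵥ (θ - v))}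
      ≤ sSup {s : ℝ | ∃ u : Fin p → ℝ, l2 u ≤ 1 ∧
          s = sInf {r : ℝ | ∃ θ ∈ Ω0, r = ∑ i, u i * (θ i - v i)}} :=
  (sInf_linf_transpose_mulVec_le_infDist hne hU v).trans
    (infDist_le_sSup_sInf_sum_mul_sub hne hconv v)

end
end
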